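/- arXiv:1812.01224 — 3 statements merged into one kernel-verified Lean document; each statement's English description precedes it below -/
import Mathlib

section
/- Let 1 ≤ H ≤ X, let R ∈ ℕ, and let x_1, …, x_R ∈ [1, X] be H-separated real numbers (i.e. |x_i − x_j| ≥ H for all i ≠ j). Then ∫_{|t| ≤ X/H} |∑_{n=1}^R exp(2πi t log x_n)|^2 dt ≪ R · X/H, with an absolute implied constant. -/
/-!
Put `θₙ = log xₙ`. Since `log b - log a ≥ (b - a) / b`, the `θₙ` are `δ`-separated with
`δ = H / X = 1 / T`, where `T = X / H`. On `[-T, T]` the triangle weight `1 - |t| / (2T)` is at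
least `1 / 2`, so the integral is at most twice the weighted integral over `[-2T, 2T]`. Expanding
`‖∑ e^{2πitθₙ}‖²` into `∑ₘ ∑ₙ cos (2π(θₘ - θₙ)t)`, every diagonal term contributes `2T`, and an
off-diagonal one is the Fourier transform of the triangle, `(1 - cos (2aT)) / (a²T) ≤ 2 / (a²T)`
at `a = 2π(θₘ - θₙ)`. Rounding `(θₘ - θₙ) / δ` maps the `n ≠ m` injectively to nonzero integers
`k` with `(θₘ - θₙ)⁻² ≤ 4 / (kδ)²`, so `∑_{n ≠ m} (θₘ - θₙ)⁻² ≤ 4 ζ(2) · 2 / δ²`, and the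
off-diagonal terms add up to `O(T)` for each `m`.
-/

open Real Finset MeasureTheory intervalIntegral

lemma abs_sub_lt_one_of_round_eq {a b : ℝ} (h : round a = round b) : |a - b| < 1 := by
  rw [round_eq, round_eq] at h
  simpa using Int.abs_sub_lt_one_of_floor_eq_floor h

lemma one_div_sq_le_four_div_round_sq {a : ℝ} (ha : a = 0 ∨ 1 ≤ |a|) :
    1 / a ^ 2 ≤ 4 / (round a : ℝ) ^ 2 := by
  rcases ha with rfl | ha
  · simp
  have hround : |a - round a| ≤ 1 / 2 := abs_sub_round a
  have hr_half : 1 / 2 ≤ |(round a : ℝ)| := by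
    linarith [abs_sub_abs_le_abs_sub a (round a)]
  have hr_one : 1 ≤ |(round a : ℝ)| := by
    have hr : round a ≠ 0 := by
      rintro h
      rw [h, Int.cast_zero, abs_zero] at hr_half
      norm_num at hr_half
    exact_mod_cast Int.one_le_abs hr
  have hr_le : |(round a : ℝ)| ≤ 2 * |a| := by
    linarith [abs_sub_abs_le_abs_sub (round a : ℝ) a, abs_sub_comm a (round a)]
  rw [← sq_abs a, ← sq_abs (round a : ℝ), div_le_div_iff₀ (by positivity) (by positivity)]
  nlinarith

lemma hasSum_int_one_div_sq : HasSum (fun k : ℤ => 1 / (k : ℝ) ^ 2) (π ^ 2 / 3) := by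
  have h := HasSum.of_nat_of_neg (f := fun k : ℤ => 1 / (k : ℝ) ^ 2)
    (by simpa using hasSum_zeta_two) (by simpa using hasSum_zeta_two)
  rwa [Int.cast_zero, zero_pow two_ne_zero, div_zero, sub_zero,
    show π ^ 2 / 6 + π ^ 2 / 6 = π ^ 2 / 3 by ring] at h

lemma sum_one_div_sq_sub_le_of_separated {ι : Type*} [Fintype ι] {θ : ι → ℝ} {δ : ℝ}
    (hδ : 0 < δ) (hsep : ∀ i j, i ≠ j → δ ≤ |θ i - θ j|) (m : ι) :
    ∑ n, 1 / (θ m - θ n) ^ 2 ≤ 4 * π ^ 2 / (3 * δ ^ 2) := by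
  set r : ι → ℤ := fun n => round ((θ m - θ n) / δ)
  have hr_inj : Function.Injective r := by
    intro i j hij
    by_contra hne
    have h := abs_sub_lt_one_of_round_eq hij
    rw [← sub_div, sub_sub_sub_cancel_left, abs_div, abs_of_pos hδ, div_lt_one hδ] at h
    exact (hsep j i (Ne.symm hne)).not_gt h
  -- at `n = m` both sides vanish, as `1 / 0 = 0`
  have hterm : ∀ n, 1 / (θ m - θ n) ^ 2 ≤ 4 / δ ^ 2 * (1 / (r n : ℝ) ^ 2) := by
    intro n
    have hscaled : (θ m - θ n) / δ = 0 ∨ 1 ≤ |(θ m - θ n) / δ| := by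
      by_cases hn : n = m
      · simp [hn]
      · rw [abs_div, abs_of_pos hδ, le_div_iff₀ hδ, one_mul]
        exact Or.inr (hsep m n (Ne.symm hn))
    calc 1 / (θ m - θ n) ^ 2 = 1 / δ ^ 2 * (1 / ((θ m - θ n) / δ) ^ 2) := by
          rw [div_pow, one_div_div, ← mul_div_assoc, one_div_mul_cancel (by positivity)]
      _ ≤ 1 / δ ^ 2 * (4 / (r n : ℝ) ^ 2) :=
          mul_le_mul_of_nonneg_left (one_div_sq_le_four_div_round_sq hscaled)
            (by positivity)
      _ = 4 / δ ^ 2 * (1 / (r n : ℝ) ^ 2) := by ring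
  calc ∑ n, 1 / (θ m - θ n) ^ 2 ≤ ∑ n, 4 / δ ^ 2 * (1 / (r n : ℝ) ^ 2) :=
        sum_le_sum fun n _ => hterm n
    _ = 4 / δ ^ 2 * ∑' n, 1 / (r n : ℝ) ^ 2 := by rw [← mul_sum, tsum_fintype]
    _ ≤ 4 / δ ^ 2 * (π ^ 2 / 3) := by
        gcongr
        exact hasSum_int_one_div_sq.tsum_eq ▸ tsum_comp_le_tsum_of_inj
          hasSum_int_one_div_sq.summable (fun k => by positivity) hr_inj
    _ = 4 * π ^ 2 / (3 * δ ^ 2) := by ring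

lemma div_le_abs_log_sub_log {H X a b : ℝ} (ha : 0 < a) (hb : 0 < b) (haX : a ≤ X) (hbX : b ≤ X)
    (hab : H ≤ |a - b|) : H / X ≤ |log a - log b| := by
  wlog hle : a ≤ b generalizing a b
  · rw [abs_sub_comm (log a)]
    exact this hb ha hbX haX (by rwa [abs_sub_comm]) (le_of_not_ge hle)
  rw [abs_sub_comm, abs_of_nonneg (sub_nonneg.2 hle)] at hab
  calc H / X ≤ (b - a) / X := by gcongr; linarith
    _ ≤ (b - a) / b := by gcongr
    _ = 1 - (b / a)⁻¹ := by field_simp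
    _ ≤ log (b / a) := one_sub_inv_le_log_of_pos (by positivity)
    _ = log b - log a := log_div hb.ne' ha.ne'
    _ ≤ |log a - log b| := by rw [abs_sub_comm]; exact le_abs_self _

lemma norm_sum_exp_mul_I_sq {ι : Type*} [Fintype ι] (α : ι → ℝ) :
    ‖∑ n, Complex.exp (α n * Complex.I)‖ ^ 2 = ∑ m, ∑ n, cos (α m - α n) := by
  have hconj : ∀ n, (starRingEnd ℂ) (Complex.exp (α n * Complex.I))
      = Complex.exp (-(α n) * Complex.I) := by
    intro n
    rw [← Complex.exp_conj, map_mul, Complex.conj_ofReal, Complex.conj_I, mul_neg, neg_mul]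
  rw [Complex.sq_norm, ← Complex.ofReal_re (Complex.normSq _), ← Complex.mul_conj, map_sum,
    sum_mul_sum, Complex.re_sum]
  refine sum_congr rfl fun m _ => ?_
  rw [Complex.re_sum]
  refine sum_congr rfl fun n _ => ?_
  rw [hconj, ← Complex.exp_add, ← add_mul, ← Complex.ofReal_neg, ← Complex.ofReal_add,
    Complex.exp_ofReal_mul_I_re, ← sub_eq_add_neg]

lemma integral_symm_eq_two_mul_of_even {f : ℝ → ℝ} (hf : Continuous f) (heven : ∀ x, f (-x) = f x)
    (L : ℝ) : ∫ x in -L..L, f x = 2 * ∫ x in 0..L, f x := by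
  have hneg : ∫ x in -L..0, f x = ∫ x in 0..L, f x := by
    simpa [heven] using (integral_comp_neg (a := 0) (b := L) f).symm
  rw [← integral_add_adjacent_intervals (hf.intervalIntegrable _ _) (hf.intervalIntegrable _ _),
    hneg, two_mul]

lemma integral_triangle {L : ℝ} (hL : 0 < L) : ∫ t in -L..L, (1 - |t| / L) = L := by
  rw [integral_symm_eq_two_mul_of_even (by fun_prop) (fun x => by rw [abs_neg])]
  have hcongr : ∫ t in (0:ℝ)..L, (1 - |t| / L) = ∫ t in (0:ℝ)..L, (1 - t / L) :=
    integral_congr fun t ht => by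
      rw [Set.uIcc_of_le hL.le] at ht
      simp only [abs_of_nonneg ht.1]
  rw [hcongr, intervalIntegral.integral_sub intervalIntegrable_const
    (intervalIntegral.intervalIntegrable_id.div_const L), intervalIntegral.integral_div]
  simp only [intervalIntegral.integral_const, sub_zero, smul_eq_mul, mul_one, integral_id]
  field_simp
  ring

lemma integral_triangle_mul_cos {L a : ℝ} (hL : 0 < L) (ha : a ≠ 0) :
    ∫ t in -L..L, (1 - |t| / L) * cos (a * t) = 2 * (1 - cos (a * L)) / (a ^ 2 * L) := by
  rw [integral_symm_eq_two_mul_of_even (by fun_prop) (fun x => by rw [abs_neg, mul_neg, cos_neg])]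
  have hcongr : ∫ t in (0:ℝ)..L, (1 - |t| / L) * cos (a * t)
      = ∫ t in (0:ℝ)..L, (1 - t / L) * cos (a * t) :=
    integral_congr fun t ht => by
      rw [Set.uIcc_of_le hL.le] at ht
      simp only [abs_of_nonneg ht.1]
  have hderiv : ∀ t ∈ Set.uIcc (0:ℝ) L, HasDerivAt
      (fun t => (1 - t / L) * (sin (a * t) / a) - cos (a * t) / (a ^ 2 * L))
      ((1 - t / L) * cos (a * t)) t := by
    intro t _
    have hlin : HasDerivAt (fun t : ℝ => a * t) a t := by
      simpa using (hasDerivAt_id t).const_mul a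
    have := (((hasDerivAt_id t).div_const L).const_sub 1).mul
      ((hlin.sin).div_const a) |>.sub ((hlin.cos).div_const (a ^ 2 * L))
    refine this.congr_deriv ?_
    simp only [id]
    field_simp
    ring
  rw [hcongr, integral_eq_sub_of_hasDerivAt hderiv
    (Continuous.intervalIntegrable (by fun_prop) _ _)]
  simp only [zero_div, sub_zero, mul_zero, sin_zero, cos_zero, zero_sub, sub_neg_eq_add]
  field_simp
  ring

lemma integral_triangle_mul_cos_le {L a : ℝ} (hL : 0 < L) (ha : a ≠ 0) :
    ∫ t in -L..L, (1 - |t| / L) * cos (a * t) ≤ 4 / (a ^ 2 * L) := by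
  rw [integral_triangle_mul_cos hL ha]
  gcongr
  linarith [neg_one_le_cos (a * L)]

lemma integral_le_two_mul_integral_triangle_mul {g : ℝ → ℝ} (hg : Continuous g) (hg0 : ∀ t, 0 ≤ g t)
    {T : ℝ} (hT : 0 < T) :
    ∫ t in -T..T, g t ≤ 2 * ∫ t in -(2 * T)..(2 * T), (1 - |t| / (2 * T)) * g t := by
  have hwg : Continuous fun t => 2 * ((1 - |t| / (2 * T)) * g t) := by fun_prop
  have hweight : ∀ t, |t| ≤ 2 * T → 0 ≤ 2 * ((1 - |t| / (2 * T)) * g t) := by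
    intro t ht
    have : |t| / (2 * T) ≤ 1 := (div_le_one (by positivity)).2 ht
    have := hg0 t
    positivity
  rw [← intervalIntegral.integral_const_mul]
  calc ∫ t in -T..T, g t ≤ ∫ t in -T..T, 2 * ((1 - |t| / (2 * T)) * g t) := by
        refine integral_mono_on (by linarith) (hg.intervalIntegrable _ _)
          (hwg.intervalIntegrable _ _) fun t ht => ?_
        have ht : |t| ≤ T := abs_le.2 ht
        have : |t| / (2 * T) ≤ 1 / 2 := by
          rw [div_le_div_iff₀ (by positivity) two_pos]; linarith
        nlinarith [hg0 t]
    _ ≤ ∫ t in -(2 * T)..(2 * T), 2 * ((1 - |t| / (2 * T)) * g t) := by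
        refine integral_mono_interval (by linarith) (by linarith) (by linarith) ?_
          (hwg.intervalIntegrable _ _)
        refine ae_restrict_of_forall_mem measurableSet_Ioc fun t ht => hweight t ?_
        exact abs_le.2 ⟨ht.1.le, ht.2⟩

lemma sum_integral_triangle_mul_cos_le {ι : Type*} [Fintype ι] {θ : ι → ℝ} {δ L : ℝ} (hδ : 0 < δ)
    (hL : 0 < L) (hsep : ∀ i j, i ≠ j → δ ≤ |θ i - θ j|) (m : ι) :
    ∑ n, ∫ t in -L..L, (1 - |t| / L) * cos (2 * π * (θ m - θ n) * t)
      ≤ L + 4 / (3 * δ ^ 2 * L) := by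
  classical
  have hoff : ∀ n ∈ univ.erase m, ∫ t in -L..L, (1 - |t| / L) * cos (2 * π * (θ m - θ n) * t)
      ≤ 1 / (π ^ 2 * L) * (1 / (θ m - θ n) ^ 2) := by
    intro n hn
    have hd : θ m - θ n ≠ 0 := by
      intro h
      have := hsep m n (ne_of_mem_erase hn).symm
      rw [h, abs_zero] at this
      linarith
    calc _ ≤ 4 / ((2 * π * (θ m - θ n)) ^ 2 * L) :=
          integral_triangle_mul_cos_le hL (by positivity)
      _ = 1 / (π ^ 2 * L) * (1 / (θ m - θ n) ^ 2) := by field_simp; ring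
  rw [← add_sum_erase _ _ (mem_univ m)]
  simp only [sub_self, mul_zero, zero_mul, cos_zero, mul_one]
  rw [integral_triangle hL]
  gcongr
  calc _ ≤ ∑ n ∈ univ.erase m, 1 / (π ^ 2 * L) * (1 / (θ m - θ n) ^ 2) := sum_le_sum hoff
    _ ≤ ∑ n, 1 / (π ^ 2 * L) * (1 / (θ m - θ n) ^ 2) :=
        sum_le_sum_of_subset_of_nonneg (erase_subset _ _) fun _ _ _ => by positivity
    _ ≤ 1 / (π ^ 2 * L) * (4 * π ^ 2 / (3 * δ ^ 2)) := by
        rw [← mul_sum]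
        gcongr
        exact sum_one_div_sq_sub_le_of_separated hδ hsep m
    _ = _ := by field_simp

theorem integral_norm_sum_exp_sq_le {ι : Type*} [Fintype ι] {θ : ι → ℝ} {δ T : ℝ} (hδ : 0 < δ)
    (hT : 0 < T) (hsep : ∀ i j, i ≠ j → δ ≤ |θ i - θ j|) :
    ∫ t in -T..T, ‖∑ n, Complex.exp (2 * π * Complex.I * t * θ n)‖ ^ 2
      ≤ 4 * Fintype.card ι * (T + 1 / (3 * δ ^ 2 * T)) := by
  set G : ℝ → ℝ := fun t => ∑ m, ∑ n, cos (2 * π * (θ m - θ n) * t)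
  have hG : ∀ t : ℝ, ‖∑ n, Complex.exp (2 * π * Complex.I * t * θ n)‖ ^ 2 = G t := by
    intro t
    convert norm_sum_exp_mul_I_sq (fun n => 2 * π * t * θ n) using 5 with m n
    · push_cast; ring
    · ring_nf
  have hG0 : ∀ t, 0 ≤ G t := fun t => hG t ▸ by positivity
  calc ∫ t in -T..T, ‖∑ n, Complex.exp (2 * π * Complex.I * t * θ n)‖ ^ 2
      = ∫ t in -T..T, G t := integral_congr fun t _ => hG t
    _ ≤ 2 * ∫ t in -(2 * T)..(2 * T), (1 - |t| / (2 * T)) * G t :=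
        integral_le_two_mul_integral_triangle_mul (by fun_prop) hG0 hT
    _ = 2 * ∑ m, ∑ n,
          ∫ t in -(2 * T)..(2 * T), (1 - |t| / (2 * T)) * cos (2 * π * (θ m - θ n) * t) := by
        congr 1
        simp only [G, mul_sum]
        rw [integral_finsetSum fun m _ => Continuous.intervalIntegrable (by fun_prop) _ _]
        exact sum_congr rfl fun m _ =>
          integral_finsetSum fun n _ => Continuous.intervalIntegrable (by fun_prop) _ _
    _ ≤ 2 * ∑ _m : ι, (2 * T + 4 / (3 * δ ^ 2 * (2 * T))) := by
        gcongr with m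
        exact sum_integral_triangle_mul_cos_le hδ (by positivity) hsep m
    _ = 4 * Fintype.card ι * (T + 1 / (3 * δ ^ 2 * T)) := by
        rw [sum_const, card_univ, nsmul_eq_mul]
        field_simp
        ring

/-- a variant of the large sieve for `H`-separated points. -/
theorem stmt3 :
    ∃ C : ℝ, 0 < C ∧ ∀ (H X : ℝ) (R : ℕ) (x : Fin R → ℝ),
      1 ≤ H → H ≤ X →
      (∀ i, 1 ≤ x i ∧ x i ≤ X) →
      (∀ i j, i ≠ j → H ≤ |x i - x j|) →
      (∫ t in (-(X / H))..(X / H),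
        ‖∑ n, Complex.exp (2 * Real.pi * Complex.I * t * Real.log (x n))‖ ^ 2)
        ≤ C * R * (X / H) := by
  refine ⟨16 / 3, by norm_num, ?_⟩
  intro H X R x hH hHX hx hsep
  have hH0 : 0 < H := by linarith
  have hX0 : 0 < X := by linarith
  have hlog_sep : ∀ i j, i ≠ j → H / X ≤ |log (x i) - log (x j)| := fun i j hij =>
    div_le_abs_log_sub_log (by linarith [hx i]) (by linarith [hx j]) (hx i).2 (hx j).2
      (hsep i j hij)
  calc _ ≤ 4 * R * (X / H + 1 / (3 * (H / X) ^ 2 * (X / H))) := by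
        simpa using integral_norm_sum_exp_sq_le (θ := fun n => log (x n)) (div_pos hH0 hX0)
          (div_pos hX0 hH0) hlog_sep
    _ = _ := by field_simp; ring
end

section
/- Let G be a finite graph with N vertices and at least δN edges for some δ > 0, and let k ∈ ℕ. Then the number of walks of length k in G (i.e. (k+1)-tuples (v_0, …, v_k) of vertices with {v_j, v_{j+1}} an edge for each 0 ≤ j < k) is at least (2δ)^k N. -/
set_option linter.unusedSectionVars false
open Finset
namespace BR
variable {V : Type*} [Fintype V] [DecidableEq V] (G : SimpleGraph V) [DecidableRel G.Adj]

def WF (k : ℕ) : Finset (Fin (k + 1) → V) :=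
  univ.filter (fun w => ∀ j : Fin k, G.Adj (w j.castSucc) (w j.succ))
noncomputable def dr (v : V) : ℝ := (G.degree v : ℝ)
noncomputable def Q (k : ℕ) (w : Fin (k + 1) → V) : ℝ :=
  ∏ i : Fin (k + 1), if i = 0 ∨ i = Fin.last k then 1 else (dr G (w i))⁻¹
lemma mem_WF {k : ℕ} {w : Fin (k + 1) → V} :
    w ∈ WF G k ↔ ∀ j : Fin k, G.Adj (w j.castSucc) (w j.succ) := by
  simp [WF]

lemma snoc_mem_WF {k : ℕ} {w : Fin (k + 1) → V} (hw : w ∈ WF G k) {u : V}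
    (hu : u ∈ G.neighborFinset (w (Fin.last k))) :
    (Fin.snoc w u : Fin (k + 2) → V) ∈ WF G (k + 1) := by
  rw [mem_WF] at hw ⊢
  intro j
  refine Fin.lastCases ?_ ?_ j
  · rw [Fin.succ_last]
    simp only [Fin.snoc_castSucc, Fin.snoc_last]
    exact (G.mem_neighborFinset _ _).1 hu
  · intro i
    rw [Fin.succ_castSucc]
    simp only [Fin.snoc_castSucc]
    exact hw i

lemma sum_WF_succ (k : ℕ) (F : (Fin (k + 2) → V) → ℝ) :
    ∑ w ∈ WF G (k + 1), F w
      = ∑ w ∈ WF G k, ∑ u ∈ G.neighborFinset (w (Fin.last k)), F (Fin.snoc w u) := by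
  rw [← Finset.sum_sigma (WF G k) (fun w => G.neighborFinset (w (Fin.last k)))
      (fun p => F (Fin.snoc p.1 p.2))]
  refine Finset.sum_nbij' (fun w => ⟨Fin.init w, w (Fin.last (k + 1))⟩)
      (fun p => Fin.snoc p.1 p.2) ?_ ?_ ?_ ?_ ?_
  · intro w hw
    rw [mem_WF] at hw
    rw [Finset.mem_sigma]
    constructor
    · rw [mem_WF]
      intro j
      have := hw j.castSucc
      rwa [Fin.succ_castSucc] at this
    · rw [SimpleGraph.mem_neighborFinset]
      have := hw (Fin.last k)
      rw [Fin.succ_last] at this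
      exact this
  · rintro ⟨w, u⟩ hp
    rw [Finset.mem_sigma] at hp
    exact snoc_mem_WF G hp.1 hp.2
  · intro w _
    exact Fin.snoc_init_self w
  · rintro ⟨w, u⟩ _
    simp only [Fin.init_snoc, Fin.snoc_last]
  · intro w _
    rw [Fin.snoc_init_self]


lemma dr_nonneg (v : V) : 0 ≤ dr G v := Nat.cast_nonneg _

lemma degree_pos_of_mem_WF {k : ℕ} {w : Fin (k + 1) → V} (hw : w ∈ WF G k)
    {j : Fin (k + 1)} (hj : j ≠ 0) : 0 < dr G (w j) := by
  rw [mem_WF] at hw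
  obtain ⟨i, rfl⟩ := Fin.eq_succ_of_ne_zero hj
  have h := hw i
  have : 0 < G.degree (w i.succ) := by
    rw [← SimpleGraph.card_neighborFinset_eq_degree]
    exact Finset.card_pos.2 ⟨w i.castSucc, by rwa [SimpleGraph.mem_neighborFinset, SimpleGraph.adj_comm]⟩
  unfold dr
  exact_mod_cast this

lemma last_ne_zero {k : ℕ} (hk : 1 ≤ k) : (Fin.last k : Fin (k + 1)) ≠ 0 := by
  intro h
  have := congrArg Fin.val h
  simp at this
  omega

lemma Q_pos {k : ℕ} {w : Fin (k + 1) → V} (hw : w ∈ WF G k) : 0 < Q G k w := by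
  apply Finset.prod_pos
  intro i _
  split
  · exact one_pos
  · next h =>
    push_neg at h
    exact inv_pos.2 (degree_pos_of_mem_WF G hw h.1)

lemma Q_one (w : Fin 2 → V) : Q G 1 w = 1 := by
  unfold Q
  apply Finset.prod_eq_one
  intro i _
  fin_cases i <;> simp [Fin.last]

lemma Q_snoc {k : ℕ} (hk : 1 ≤ k) (w : Fin (k + 1) → V) (u : V) :
    Q G (k + 1) (Fin.snoc w u) = Q G k w * (dr G (w (Fin.last k)))⁻¹ := by
  unfold Q
  rw [Fin.prod_univ_castSucc (n := k + 1)]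
  rw [if_pos (Or.inr rfl)]
  rw [mul_one]
  have hL : ∀ i : Fin (k + 1),
      (if i.castSucc = 0 ∨ i.castSucc = Fin.last (k + 1) then (1:ℝ)
        else (dr G ((Fin.snoc w u : Fin (k + 2) → V) i.castSucc))⁻¹)
      = if i = 0 then 1 else (dr G (w i))⁻¹ := by
    intro i
    rw [Fin.snoc_castSucc]
    congr 1
    simp [(Fin.castSucc_lt_last i).ne, Fin.castSucc_eq_zero_iff]
  rw [Finset.prod_congr rfl (fun i _ => hL i)]
  rw [Fin.prod_univ_castSucc (n := k), Fin.prod_univ_castSucc (n := k)]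
  rw [if_neg (last_ne_zero hk), if_pos (Or.inr rfl), mul_one]
  congr 1
  apply Finset.prod_congr rfl
  intro i _
  have h1 : (i.castSucc : Fin (k+1)) ≠ Fin.last k := (Fin.castSucc_lt_last i).ne
  simp [Fin.castSucc_eq_zero_iff, h1]

lemma dr_pos_of_adj {x y : V} (h : G.Adj x y) : 0 < dr G x := by
  have : 0 < G.degree x := by
    rw [← SimpleGraph.card_neighborFinset_eq_degree]
    exact Finset.card_pos.2 ⟨y, (G.mem_neighborFinset _ _).2 h⟩
  unfold dr
  exact_mod_cast this

lemma WF_zero : WF G 0 = (univ : Finset (Fin 1 → V)) := by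
  apply Finset.filter_true_of_mem
  intro w _ 
  exact fun j => j.elim0

lemma card_nbhd (v : V) : ∑ x : V, (if x ∈ G.neighborFinset v then (1:ℝ) else 0) = dr G v := by
  rw [Finset.sum_ite_mem, Finset.univ_inter, Finset.sum_const, nsmul_eq_mul, mul_one]
  rw [SimpleGraph.card_neighborFinset_eq_degree]
  rfl

lemma phi {ℓ : ℕ} (hℓ : 1 ≤ ℓ) (v : V) :
    ∑ w ∈ (WF G ℓ).filter (fun w => w (Fin.last ℓ) = v), Q G ℓ w = dr G v := by
  induction ℓ, hℓ using Nat.le_induction generalizing v with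
  | base =>
    rw [Finset.sum_filter,
      sum_WF_succ G 0 (fun w => if w (Fin.last 1) = v then Q G 1 w else 0)]
    have h1 : ∀ w : Fin 1 → V, ∀ u : V,
        (if (Fin.snoc w u : Fin 2 → V) (Fin.last 1) = v then Q G 1 (Fin.snoc w u) else 0)
          = if u = v then 1 else 0 := by
      intro w u
      rw [Fin.snoc_last, Q_one]
    calc ∑ w ∈ WF G 0, ∑ u ∈ G.neighborFinset (w (Fin.last 0)),
            (if (Fin.snoc w u : Fin 2 → V) (Fin.last 1) = v then Q G 1 (Fin.snoc w u) else 0)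
        = ∑ w ∈ WF G 0, ∑ u ∈ G.neighborFinset (w (Fin.last 0)),
            (if u = v then (1:ℝ) else 0) := by
          exact Finset.sum_congr rfl fun w _ => Finset.sum_congr rfl fun u _ => h1 w u
      _ = ∑ w ∈ WF G 0, (if v ∈ G.neighborFinset (w (Fin.last 0)) then (1:ℝ) else 0) := by
          exact Finset.sum_congr rfl fun w _ => Finset.sum_ite_eq' _ _ _
      _ = ∑ x : V, (if v ∈ G.neighborFinset x then (1:ℝ) else 0) := by
          rw [WF_zero]
          exact Fintype.sum_equiv (Equiv.funUnique (Fin 1) V) _ _ (fun w => rfl)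
      _ = ∑ x : V, (if x ∈ G.neighborFinset v then (1:ℝ) else 0) := by
          apply Finset.sum_congr rfl
          intro x _
          congr 1
          simp only [SimpleGraph.mem_neighborFinset]
          rw [SimpleGraph.adj_comm]
      _ = dr G v := card_nbhd G v
  | succ ℓ hℓ ih =>
    rw [Finset.sum_filter,
      sum_WF_succ G ℓ (fun w => if w (Fin.last (ℓ+1)) = v then Q G (ℓ+1) w else 0)]
    have h1 : ∀ w ∈ WF G ℓ, ∑ u ∈ G.neighborFinset (w (Fin.last ℓ)),
        (if (Fin.snoc w u : Fin (ℓ+2) → V) (Fin.last (ℓ+1)) = v then Q G (ℓ+1) (Fin.snoc w u) else 0)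
          = Q G ℓ w * (if v ∈ G.neighborFinset (w (Fin.last ℓ)) then (dr G (w (Fin.last ℓ)))⁻¹ else 0) := by
      intro w _
      rw [mul_ite, mul_zero]
      rw [← Finset.sum_ite_eq' (G.neighborFinset (w (Fin.last ℓ))) v
        (fun _ => Q G ℓ w * (dr G (w (Fin.last ℓ)))⁻¹)]
      apply Finset.sum_congr rfl
      intro u _
      rw [Fin.snoc_last, Q_snoc G hℓ]
    rw [Finset.sum_congr rfl h1]
    rw [← Finset.sum_fiberwise_of_maps_to (g := fun w => w (Fin.last ℓ))
      (fun w _ => Finset.mem_univ (w (Fin.last ℓ))) 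
      (fun w => Q G ℓ w * (if v ∈ G.neighborFinset (w (Fin.last ℓ)) then (dr G (w (Fin.last ℓ)))⁻¹ else 0))]
    have h2 : ∀ x : V, ∑ w ∈ (WF G ℓ).filter (fun w => w (Fin.last ℓ) = x),
        Q G ℓ w * (if v ∈ G.neighborFinset (w (Fin.last ℓ)) then (dr G (w (Fin.last ℓ)))⁻¹ else 0)
        = dr G x * (if v ∈ G.neighborFinset x then (dr G x)⁻¹ else 0) := by
      intro x
      have step : ∑ w ∈ (WF G ℓ).filter (fun w => w (Fin.last ℓ) = x),
          Q G ℓ w * (if v ∈ G.neighborFinset (w (Fin.last ℓ)) then (dr G (w (Fin.last ℓ)))⁻¹ else 0)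
          = (∑ w ∈ (WF G ℓ).filter (fun w => w (Fin.last ℓ) = x), Q G ℓ w)
              * (if v ∈ G.neighborFinset x then (dr G x)⁻¹ else 0) := by
        rw [Finset.sum_mul]
        apply Finset.sum_congr rfl
        intro w hw
        rw [Finset.mem_filter] at hw
        rw [hw.2]
      rw [step, ih x]
    rw [Finset.sum_congr rfl (fun x _ => h2 x)]
    calc ∑ x : V, dr G x * (if v ∈ G.neighborFinset x then (dr G x)⁻¹ else 0)
        = ∑ x : V, (if x ∈ G.neighborFinset v then (1:ℝ) else 0) := by
          apply Finset.sum_congr rfl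
          intro x _
          rw [mul_ite, mul_zero]
          have hm : v ∈ G.neighborFinset x ↔ x ∈ G.neighborFinset v := by
            simp only [SimpleGraph.mem_neighborFinset]
            rw [SimpleGraph.adj_comm]
          by_cases h : x ∈ G.neighborFinset v
          · rw [if_pos (hm.2 h), if_pos h]
            exact mul_inv_cancel₀ (dr_pos_of_adj G ((G.mem_neighborFinset _ _).1 (hm.2 h))).ne'
          · rw [if_neg (fun hc => h (hm.1 hc)), if_neg h]
      _ = dr G v := card_nbhd G v


lemma psi {k j : ℕ} (hj : 1 ≤ j) (hjk : j + 1 ≤ k) (v : V) :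
    ∑ w ∈ (WF G k).filter (fun w => w ⟨j, Nat.lt_succ_of_lt hjk⟩ = v), Q G k w = dr G v := by
  induction k, hjk using Nat.le_induction with
  | base =>
    rw [Finset.sum_filter,
      sum_WF_succ G j (fun w => if w ⟨j, Nat.lt_succ_of_lt (Nat.le_refl (j+1))⟩ = v
        then Q G (j+1) w else 0)]
    have key : ∀ w ∈ WF G j, ∑ u ∈ G.neighborFinset (w (Fin.last j)),
        (if (Fin.snoc w u : Fin (j+2) → V) ⟨j, Nat.lt_succ_of_lt (Nat.le_refl (j+1))⟩ = v
          then Q G (j+1) (Fin.snoc w u) else 0)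
        = (if w (Fin.last j) = v then (dr G v * (dr G v)⁻¹) * Q G j w else 0) := by
      intro w hw
      have hidx : (⟨j, Nat.lt_succ_of_lt (Nat.le_refl (j+1))⟩ : Fin (j+2))
          = Fin.castSucc (Fin.last j) := rfl
      have hsnoc : ∀ u : V, (Fin.snoc w u : Fin (j+2) → V)
          ⟨j, Nat.lt_succ_of_lt (Nat.le_refl (j+1))⟩ = w (Fin.last j) := by
        intro u; rw [hidx, Fin.snoc_castSucc]
      calc ∑ u ∈ G.neighborFinset (w (Fin.last j)),
            (if (Fin.snoc w u : Fin (j+2) → V) ⟨j, Nat.lt_succ_of_lt (Nat.le_refl (j+1))⟩ = v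
              then Q G (j+1) (Fin.snoc w u) else 0)
          = ∑ _u ∈ G.neighborFinset (w (Fin.last j)),
            (if w (Fin.last j) = v then Q G j w * (dr G (w (Fin.last j)))⁻¹ else 0) := by
            apply Finset.sum_congr rfl
            intro u _
            rw [hsnoc u, Q_snoc G hj]
        _ = (if w (Fin.last j) = v then (dr G v * (dr G v)⁻¹) * Q G j w else 0) := by
            rw [Finset.sum_const, nsmul_eq_mul]
            by_cases h : w (Fin.last j) = v
            · rw [if_pos h, if_pos h, h]
              rw [SimpleGraph.card_neighborFinset_eq_degree]
              show dr G v * _ = _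
              ring
            · rw [if_neg h, if_neg h, mul_zero]
    rw [Finset.sum_congr rfl key]
    rw [← Finset.sum_filter]
    have : ∑ w ∈ (WF G j).filter (fun w => w (Fin.last j) = v),
        (dr G v * (dr G v)⁻¹) * Q G j w
        = (dr G v * (dr G v)⁻¹) * ∑ w ∈ (WF G j).filter (fun w => w (Fin.last j) = v), Q G j w := by
      rw [Finset.mul_sum]
    rw [this, phi G hj v]
    by_cases h : dr G v = 0
    · rw [h]; ring
    · rw [mul_inv_cancel₀ h, one_mul]
  | succ k hk ih =>
    rw [Finset.sum_filter,
      sum_WF_succ G k (fun w => if w ⟨j, Nat.lt_succ_of_lt (Nat.le_succ_of_le hk)⟩ = v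
        then Q G (k+1) w else 0)]
    have key : ∀ w ∈ WF G k, ∑ u ∈ G.neighborFinset (w (Fin.last k)),
        (if (Fin.snoc w u : Fin (k+2) → V) ⟨j, Nat.lt_succ_of_lt (Nat.le_succ_of_le hk)⟩ = v
          then Q G (k+1) (Fin.snoc w u) else 0)
        = (if w ⟨j, Nat.lt_succ_of_lt hk⟩ = v then Q G k w else 0) := by
      intro w hw
      have hk1 : 1 ≤ k := le_trans (by omega) hk
      have hidx : (⟨j, Nat.lt_succ_of_lt (Nat.le_succ_of_le hk)⟩ : Fin (k+2))
          = Fin.castSucc ⟨j, Nat.lt_succ_of_lt hk⟩ := rfl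
      have hsnoc : ∀ u : V, (Fin.snoc w u : Fin (k+2) → V)
          ⟨j, Nat.lt_succ_of_lt (Nat.le_succ_of_le hk)⟩ = w ⟨j, Nat.lt_succ_of_lt hk⟩ := by
        intro u; rw [hidx, Fin.snoc_castSucc]
      have hdeg : 0 < dr G (w (Fin.last k)) :=
        degree_pos_of_mem_WF G hw (last_ne_zero hk1)
      calc ∑ u ∈ G.neighborFinset (w (Fin.last k)),
            (if (Fin.snoc w u : Fin (k+2) → V) ⟨j, Nat.lt_succ_of_lt (Nat.le_succ_of_le hk)⟩ = v
              then Q G (k+1) (Fin.snoc w u) else 0)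
          = ∑ _u ∈ G.neighborFinset (w (Fin.last k)),
            (if w ⟨j, Nat.lt_succ_of_lt hk⟩ = v then Q G k w * (dr G (w (Fin.last k)))⁻¹ else 0) := by
            apply Finset.sum_congr rfl
            intro u _
            rw [hsnoc u, Q_snoc G hk1]
        _ = (if w ⟨j, Nat.lt_succ_of_lt hk⟩ = v then Q G k w else 0) := by
            rw [Finset.sum_const, nsmul_eq_mul]
            by_cases h : w ⟨j, Nat.lt_succ_of_lt hk⟩ = v
            · rw [if_pos h, if_pos h]
              rw [SimpleGraph.card_neighborFinset_eq_degree]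
              show dr G (w (Fin.last k)) * _ = _
              field_simp
            · rw [if_neg h, if_neg h, mul_zero]
    rw [Finset.sum_congr rfl key, ← Finset.sum_filter]
    exact ih


lemma sumQ {k : ℕ} (hk : 1 ≤ k) : ∑ w ∈ WF G k, Q G k w = ∑ v, dr G v := by
  rw [← Finset.sum_fiberwise_of_maps_to (g := fun w => w (Fin.last k))
    (fun w _ => Finset.mem_univ (w (Fin.last k))) (Q G k)]
  exact Finset.sum_congr rfl (fun v _ => phi G hk v)

lemma Q_inv {k : ℕ} (w : Fin (k + 1) → V) :
    (Q G k w)⁻¹ = ∏ i : Fin (k + 1), (if i = 0 ∨ i = Fin.last k then 1 else dr G (w i)) := by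
  unfold Q
  rw [← Finset.prod_inv_distrib]
  apply Finset.prod_congr rfl
  intro i _
  by_cases h : i = 0 ∨ i = Fin.last k
  · rw [if_pos h, if_pos h, inv_one]
  · rw [if_neg h, if_neg h, inv_inv]

lemma card_interior {k : ℕ} (hk : 1 ≤ k) :
    (univ.filter (fun i : Fin (k+1) => ¬(i = 0 ∨ i = Fin.last k))).card = k - 1 := by
  have h : univ.filter (fun i : Fin (k+1) => ¬(i = 0 ∨ i = Fin.last k))
      = univ \ {0, Fin.last k} := by
    ext i
    simp [not_or]
  rw [h, Finset.card_sdiff_of_subset (fun x _ => Finset.mem_univ x)]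
  rw [Finset.card_univ, Fintype.card_fin]
  have h2 : ({0, Fin.last k} : Finset (Fin (k+1))).card = 2 := by
    rw [Finset.card_insert_of_notMem (by
      rw [Finset.mem_singleton]
      exact fun hc => last_ne_zero hk hc.symm), Finset.card_singleton]
  rw [h2]
  omega

lemma col {k : ℕ} (hk : 1 ≤ k) (hm2 : 0 < ∑ v, dr G v) (i : Fin (k+1)) (h0 : i ≠ 0)
    (hl : i ≠ Fin.last k) :
    ∏ w ∈ WF G k, dr G (w i) ^ (Q G k w / ∑ v, dr G v)
      = ∏ v, dr G v ^ (dr G v / ∑ v, dr G v) := by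
  rcases i with ⟨jv, hjv⟩
  rw [← Finset.prod_fiberwise_of_maps_to (g := fun w => w ⟨jv, hjv⟩)
    (fun w _ => Finset.mem_univ _) (fun w => dr G (w ⟨jv, hjv⟩) ^ (Q G k w / ∑ v, dr G v))]
  apply Finset.prod_congr rfl
  intro v _
  have h1 : 1 ≤ jv := by
    rcases Nat.eq_zero_or_pos jv with h | h
    · exact absurd (Fin.ext h : (⟨jv, hjv⟩ : Fin (k+1)) = 0) h0
    · exact h
  have h2 : jv + 1 ≤ k := by
    have hne : jv ≠ k := fun h => hl (Fin.ext (by simp [h, Fin.last]))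
    omega
  have hpsi : ∑ w ∈ (WF G k).filter (fun w => w ⟨jv, hjv⟩ = v), Q G k w = dr G v :=
    psi G h1 h2 v
  have hrw : ∏ w ∈ (WF G k).filter (fun w => w ⟨jv, hjv⟩ = v),
      dr G (w ⟨jv, hjv⟩) ^ (Q G k w / ∑ u, dr G u)
      = ∏ w ∈ (WF G k).filter (fun w => w ⟨jv, hjv⟩ = v),
      dr G v ^ (Q G k w / ∑ u, dr G u) := by
    apply Finset.prod_congr rfl
    intro w hw
    rw [(Finset.mem_filter.1 hw).2]
  rw [hrw]
  by_cases hdv : dr G v = 0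
  · have hfib : (WF G k).filter (fun w => w ⟨jv, hjv⟩ = v) = ∅ := by
      rcases Finset.eq_empty_or_nonempty ((WF G k).filter (fun w => w ⟨jv, hjv⟩ = v)) with h | h
      · exact h
      · exfalso
        have hpos : 0 < ∑ w ∈ (WF G k).filter (fun w => w ⟨jv, hjv⟩ = v), Q G k w :=
          Finset.sum_pos (fun x hx => Q_pos G (Finset.mem_filter.1 hx).1) h
        rw [hpsi, hdv] at hpos
        exact lt_irrefl 0 hpos
    rw [hfib, Finset.prod_empty, hdv, zero_div, Real.rpow_zero]
  · have hdvpos : 0 < dr G v := lt_of_le_of_ne (dr_nonneg G v) (Ne.symm hdv)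
    rw [← Real.rpow_sum_of_pos hdvpos, ← Finset.sum_div, hpsi]

lemma main {k : ℕ} (hk : 1 ≤ k) (hm2 : 0 < ∑ v, dr G v) :
    (∑ v, dr G v) * (∏ v, dr G v ^ (dr G v / ∑ v, dr G v)) ^ (k - 1)
      ≤ ((WF G k).card : ℝ) := by
  set m2 : ℝ := ∑ v, dr G v with hm2def
  set C : ℝ := ∏ v, dr G v ^ (dr G v / m2) with hCdef
  have hQpos : ∀ w ∈ WF G k, 0 < Q G k w := fun w hw => Q_pos G hw
  have hsum1 : ∑ w ∈ WF G k, Q G k w / m2 = 1 := by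
    rw [← Finset.sum_div, sumQ G hk, div_self hm2.ne']
  have hAM := Real.geom_mean_le_arith_mean_weighted (WF G k)
    (fun w => Q G k w / m2) (fun w => m2 / Q G k w)
    (fun w hw => div_nonneg (hQpos w hw).le hm2.le)
    hsum1
    (fun w hw => div_nonneg hm2.le (hQpos w hw).le)
  have hRHS : ∑ w ∈ WF G k, (Q G k w / m2) * (m2 / Q G k w) = ((WF G k).card : ℝ) := by
    rw [Finset.sum_congr rfl (fun w hw => by
      rw [div_mul_div_comm, mul_comm (Q G k w) m2,
        div_self (mul_ne_zero hm2.ne' (hQpos w hw).ne')]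
        : ∀ w ∈ WF G k, (Q G k w / m2) * (m2 / Q G k w) = 1)]
    rw [Finset.sum_const, nsmul_eq_mul, mul_one]
  have hLHS : ∏ w ∈ WF G k, (m2 / Q G k w) ^ (Q G k w / m2) = m2 * C ^ (k - 1) := by
    have step1 : ∀ w ∈ WF G k, (m2 / Q G k w) ^ (Q G k w / m2)
        = m2 ^ (Q G k w / m2) *
          ∏ i : Fin (k+1), (if i = 0 ∨ i = Fin.last k then 1 else dr G (w i)) ^ (Q G k w / m2) := by
      intro w hw
      rw [div_eq_mul_inv, Real.mul_rpow hm2.le (inv_nonneg.2 (hQpos w hw).le), Q_inv,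
        ← Real.finset_prod_rpow _ _ (fun i _ => by
          by_cases h : i = 0 ∨ i = Fin.last k
          · rw [if_pos h]; exact zero_le_one
          · rw [if_neg h]; exact dr_nonneg G _) _]
    rw [Finset.prod_congr rfl step1, Finset.prod_mul_distrib]
    have fact1 : ∏ w ∈ WF G k, m2 ^ (Q G k w / m2) = m2 := by
      rw [← Real.rpow_sum_of_pos hm2, hsum1, Real.rpow_one]
    have fact2 : ∏ w ∈ WF G k, ∏ i : Fin (k+1),
        (if i = 0 ∨ i = Fin.last k then 1 else dr G (w i)) ^ (Q G k w / m2) = C ^ (k - 1) := by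
      rw [Finset.prod_comm]
      have inner : ∀ i : Fin (k+1), i ∈ (univ : Finset (Fin (k+1))) → (∏ w ∈ WF G k,
          (if i = 0 ∨ i = Fin.last k then 1 else dr G (w i)) ^ (Q G k w / m2))
          = (if i = 0 ∨ i = Fin.last k then 1 else C) := by
        intro i _
        by_cases h : i = 0 ∨ i = Fin.last k
        · rw [if_pos h]
          apply Finset.prod_eq_one
          intro w _
          rw [if_pos h, Real.one_rpow]
        · rw [if_neg h]
          push_neg at h
          rw [Finset.prod_congr rfl (fun w _ => by rw [if_neg (not_or.2 ⟨h.1, h.2⟩)])]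
          exact col G hk hm2 i h.1 h.2
      rw [Finset.prod_congr rfl inner, Finset.prod_ite _ _, Finset.prod_const_one, one_mul,
        Finset.prod_const, card_interior hk]
    rw [fact1, fact2]
  rw [hRHS, hLHS] at hAM
  exact hAM


lemma geom_ge {ι : Type*} [Fintype ι] (f : ι → ℝ) (hf : ∀ i, 0 ≤ f i)
    (hS : 0 < ∑ i, f i) {c : ℝ} (hc : 0 < c)
    (hcn : c * (Fintype.card ι : ℝ) ≤ ∑ i, f i) :
    c ≤ ∏ i, f i ^ (f i / ∑ i, f i) := by
  have hCpos : 0 < ∏ i, f i ^ (f i / ∑ i, f i) := by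
    apply Finset.prod_pos
    intro v _
    by_cases h : f v = 0
    · rw [h, zero_div, Real.rpow_zero]; exact one_pos
    · exact Real.rpow_pos_of_pos (lt_of_le_of_ne (hf v) (Ne.symm h)) _
  have hsum1 : ∑ i, f i / (∑ i, f i) = 1 := by
    rw [← Finset.sum_div, div_self hS.ne']
  have hAM := Real.geom_mean_le_arith_mean_weighted univ
    (fun i => f i / ∑ i, f i) (fun i => c * (f i)⁻¹)
    (fun i _ => div_nonneg (hf i) hS.le)
    hsum1
    (fun i _ => mul_nonneg hc.le (inv_nonneg.2 (hf i)))
  have hR : ∑ i, (f i / ∑ i, f i) * (c * (f i)⁻¹) ≤ 1 := by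
    have hterm : ∀ i : ι, (f i / ∑ i, f i) * (c * (f i)⁻¹) ≤ c / ∑ i, f i := by
      intro i
      by_cases h : f i = 0
      · rw [h]
        simp only [zero_div, zero_mul]
        positivity
      · have heq : (f i / ∑ i, f i) * (c * (f i)⁻¹) = c / ∑ i, f i := by
          field_simp
        rw [heq]
    calc ∑ i, (f i / ∑ i, f i) * (c * (f i)⁻¹) ≤ ∑ _i : ι, c / ∑ i, f i :=
          Finset.sum_le_sum (fun i _ => hterm i)
      _ = (Fintype.card ι : ℝ) * (c / ∑ i, f i) := by
          rw [Finset.sum_const, nsmul_eq_mul, Finset.card_univ]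
      _ ≤ 1 := by
          calc (Fintype.card ι : ℝ) * (c / ∑ i, f i) = c * (Fintype.card ι : ℝ) / ∑ i, f i := by
                ring
            _ ≤ 1 := by rw [div_le_one hS]; exact hcn
  have hL : ∏ i, (c * (f i)⁻¹) ^ (f i / ∑ i, f i)
      = c * (∏ i, f i ^ (f i / ∑ i, f i))⁻¹ := by
    have step : ∀ i : ι, (c * (f i)⁻¹) ^ (f i / ∑ i, f i)
        = c ^ (f i / ∑ i, f i) * ((f i) ^ (f i / ∑ i, f i))⁻¹ := by
      intro i
      rw [Real.mul_rpow hc.le (inv_nonneg.2 (hf i)), Real.inv_rpow (hf i)]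
    rw [Finset.prod_congr rfl (fun i _ => step i), Finset.prod_mul_distrib,
      ← Real.rpow_sum_of_pos hc, hsum1, Real.rpow_one, ← Finset.prod_inv_distrib]
  have hfinal : c * (∏ i, f i ^ (f i / ∑ i, f i))⁻¹ ≤ 1 := by
    rw [← hL]
    exact le_trans hAM hR
  calc c = (c * (∏ i, f i ^ (f i / ∑ i, f i))⁻¹) * ∏ i, f i ^ (f i / ∑ i, f i) := by
        field_simp
    _ ≤ 1 * ∏ i, f i ^ (f i / ∑ i, f i) := mul_le_mul_of_nonneg_right hfinal hCpos.le
    _ = ∏ i, f i ^ (f i / ∑ i, f i) := one_mul _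

lemma WF_card_zero : ((WF G 0).card : ℝ) = (Fintype.card V : ℝ) := by
  rw [WF_zero, Finset.card_univ]
  norm_num

end BR

/-- the Blakley–Roy inequality: a graph with `N` vertices and at least
`δN` edges has at least `(2δ)^k N` walks of length `k`. -/
theorem stmt10 (V : Type*) [Fintype V] (G : SimpleGraph V) [DecidableRel G.Adj]
    (δ : ℝ) (k : ℕ) (hδ : 0 < δ)
    (hE : δ * Fintype.card V ≤ (G.edgeFinset.card : ℝ)) :
    (2 * δ) ^ k * Fintype.card V ≤
      (Set.ncard {w : Fin (k + 1) → V |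
        ∀ j : Fin k, G.Adj (w j.castSucc) (w j.succ)} : ℝ) := by
  classical
  have hset : {w : Fin (k + 1) → V | ∀ j : Fin k, G.Adj (w j.castSucc) (w j.succ)}
      = ↑(BR.WF G k) := by
    ext w
    simp [BR.WF]
  rw [hset, Set.ncard_coe_finset]
  rcases Nat.eq_zero_or_pos (Fintype.card V) with h0 | hn
  · rw [h0]
    push_cast
    rw [mul_zero]
    positivity
  rcases Nat.eq_zero_or_pos k with rfl | hk
  · rw [pow_zero, one_mul, BR.WF_card_zero]
  -- main case
  have hnpos : (0:ℝ) < (Fintype.card V : ℝ) := by exact_mod_cast hn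
  have hm2eq : ∑ v, BR.dr G v = 2 * (G.edgeFinset.card : ℝ) := by
    unfold BR.dr
    rw [← Nat.cast_sum]
    rw [SimpleGraph.sum_degrees_eq_twice_card_edges]
    push_cast
    ring
  have hm2ge : 2 * δ * (Fintype.card V : ℝ) ≤ ∑ v, BR.dr G v := by
    rw [hm2eq]
    nlinarith
  have hm2pos : 0 < ∑ v, BR.dr G v := by
    have : (0:ℝ) < 2 * δ * (Fintype.card V : ℝ) := by positivity
    linarith
  have hmain := BR.main G hk hm2pos
  have hCge2 : 2 * δ ≤ ∏ v, BR.dr G v ^ (BR.dr G v / ∑ v, BR.dr G v) :=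
    BR.geom_ge (BR.dr G) (BR.dr_nonneg G) hm2pos (by positivity) hm2ge
  calc (2 * δ) ^ k * (Fintype.card V : ℝ)
      = (2 * δ * (Fintype.card V : ℝ)) * (2 * δ) ^ (k - 1) := by
        have hpow : (2 * δ) * (2 * δ) ^ (k - 1) = (2 * δ) ^ k := by
          rw [← pow_succ', Nat.sub_add_cancel hk]
        rw [← hpow]
        ring
    _ ≤ (∑ v, BR.dr G v) * (∏ v, BR.dr G v ^ (BR.dr G v / ∑ v, BR.dr G v)) ^ (k - 1) := by
        apply mul_le_mul hm2ge (pow_le_pow_left₀ (by positivity) hCge2 _) (by positivity) hm2pos.le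
    _ ≤ ((BR.WF G k).card : ℝ) := hmain
end

section
/- Let b, q be coprime integers with q ≥ 1. Then for every integer n, e(bn/q) = ∑_{q = q₁q₂} ∑_{χ mod q₁} c_{b,χ} · 1_{q₂ | n} · χ(n/q₂), where c_{b,χ} := (1/φ(q₁)) ∑_{x mod q₁} conj(χ(x)) e(bx/q₁), the outer sum is over factorizations q = q₁q₂ into positive integers, the inner sum is over Dirichlet characters χ of modulus q₁, and |c_{b,χ}| ≤ 1 for every χ. -/
open Finset

/-!
The coefficients `c_{b,χ}` are the Fourier coefficients of `x ↦ e(bx/q₁)` restricted to the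
units mod `q₁`, so orthogonality of Dirichlet characters gives
`∑_χ c_{b,χ} χ(m) = e(bm/q₁)` when `(m, q₁) = 1` and `0` otherwise. Taking `m = n/q₂`, this is
nonzero for exactly one factorization `q = q₁q₂`, namely `q₂ = gcd(n, q)`, and there
`e(bm/q₁) = e(bn/q)`. The bound `|c_{b,χ}| ≤ 1` is the triangle inequality: `χ` is supported
on the `φ(q₁)` units, where it has modulus one.
-/

/-- `e(x) = e^{2πix}`. -/
noncomputable def e (x : ℝ) : ℂ := Complex.exp (2 * Real.pi * Complex.I * x)

/-- The normalized Gauss sum `c_{b,χ} = φ(q₁)⁻¹ ∑_{x mod q₁} conj(χ(x)) e(bx/q₁)`. -/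
noncomputable def gaussCoeff (b : ℤ) (q₁ : ℕ) (χ : DirichletCharacter ℂ q₁) : ℂ :=
  (1 / (q₁.totient : ℂ)) *
    ∑ x ∈ Finset.range q₁, (starRingEnd ℂ) (χ ((x : ℕ) : ZMod q₁)) * e ((b : ℝ) * x / q₁)

lemma e_add (x y : ℝ) : e (x + y) = e x * e y := by
  simp only [e, ← Complex.exp_add]
  push_cast
  ring_nf

lemma e_intCast (k : ℤ) : e k = 1 := by
  rw [e, ← Complex.exp_int_mul_two_pi_mul_I k]
  push_cast
  ring_nf

lemma norm_e (x : ℝ) : ‖e x‖ = 1 := by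
  rw [e, ← Complex.norm_exp_ofReal_mul_I (2 * Real.pi * x)]
  push_cast
  ring_nf

lemma e_add_intCast (x : ℝ) (k : ℤ) : e (x + k) = e x := by
  rw [e_add, e_intCast, mul_one]

lemma e_mul_val_intCast_div (b m : ℤ) (q : ℕ) [NeZero q] :
    e (b * ((m : ZMod q).val : ℝ) / q) = e (b * m / q) := by
  have hm : (m : ℝ) = ((m : ZMod q).val : ℝ) + q * (m / q : ℤ) := by
    have := Int.emod_add_mul_ediv m q
    rw [← ZMod.val_intCast] at this
    exact_mod_cast this.symm
  have hq : (q : ℝ) ≠ 0 := Nat.cast_ne_zero.mpr (NeZero.ne q)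
  rw [hm, show (b : ℝ) * ((m : ZMod q).val + q * (m / q : ℤ)) / q
      = b * (m : ZMod q).val / q + (b * (m / q) : ℤ) by push_cast; field_simp, e_add_intCast]

lemma sum_range_eq_sum_zmod_val {M : Type*} [AddCommMonoid M] (q : ℕ) [NeZero q] (f : ℕ → M) :
    ∑ x ∈ range q, f x = ∑ x : ZMod q, f x.val := by
  refine sum_nbij' (fun x => (x : ZMod q)) ZMod.val (by simp) (by simp [ZMod.val_lt])
    (fun x hx => ZMod.val_cast_of_lt (mem_range.mp hx)) (fun x _ => ZMod.natCast_zmod_val x)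
    (fun x hx => by rw [ZMod.val_cast_of_lt (mem_range.mp hx)])

lemma gaussCoeff_eq_sum_zmod (b : ℤ) {q : ℕ} [NeZero q] (χ : DirichletCharacter ℂ q) :
    gaussCoeff b q χ =
      (q.totient : ℂ)⁻¹ * ∑ x : ZMod q, starRingEnd ℂ (χ x) * e (b * x.val / q) := by
  rw [gaussCoeff, sum_range_eq_sum_zmod_val, one_div]
  simp only [ZMod.natCast_zmod_val]

lemma DirichletCharacter.norm_apply_le_one_apply {n : ℕ} (χ : DirichletCharacter ℂ n)
    (a : ZMod n) : ‖χ a‖ ≤ (1 : MulChar (ZMod n) ℝ) a := by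
  by_cases ha : IsUnit a
  · rw [MulChar.one_apply ha]
    exact χ.norm_le_one a
  · rw [χ.map_nonunit ha, MulChar.map_nonunit _ ha, norm_zero]

lemma norm_gaussCoeff_le_one (b : ℤ) {q : ℕ} (χ : DirichletCharacter ℂ q) :
    ‖gaussCoeff b q χ‖ ≤ 1 := by
  rcases eq_or_ne q 0 with rfl | hq
  · simp [gaussCoeff]
  have : NeZero q := ⟨hq⟩
  have hφ : (0 : ℝ) < q.totient := by exact_mod_cast Nat.totient_pos.mpr (Nat.pos_of_ne_zero hq)
  rw [gaussCoeff_eq_sum_zmod, norm_mul, norm_inv, Complex.norm_natCast]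
  calc (q.totient : ℝ)⁻¹ * ‖∑ x : ZMod q, starRingEnd ℂ (χ x) * e (b * x.val / q)‖
      ≤ (q.totient : ℝ)⁻¹ * ∑ x : ZMod q, (1 : MulChar (ZMod q) ℝ) x := by
        gcongr
        refine (norm_sum_le _ _).trans (sum_le_sum fun x _ => ?_)
        rw [norm_mul, norm_e, mul_one, RCLike.norm_conj]
        exact χ.norm_apply_le_one_apply x
    _ = 1 := by
        rw [MulChar.sum_one_eq_card_units, ZMod.card_units_eq_totient]
        field_simp

lemma DirichletCharacter.conj_apply_of_isUnit {n : ℕ} (χ : DirichletCharacter ℂ n) {x : ZMod n}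
    (hx : IsUnit x) : starRingEnd ℂ (χ x) = χ x⁻¹ := by
  rw [← RCLike.star_def, MulChar.star_apply', MulChar.inv_apply_eq_inv']
  exact inv_eq_of_mul_eq_one_right (by rw [← map_mul, ZMod.mul_inv_of_unit x hx, map_one])

lemma DirichletCharacter.sum_conj_apply_mul_apply {n : ℕ} [NeZero n] (x y : ZMod n) :
    ∑ χ : DirichletCharacter ℂ n, starRingEnd ℂ (χ x) * χ y =
      if x = y ∧ IsUnit y then (n.totient : ℂ) else 0 := by
  by_cases hx : IsUnit x
  · simp only [DirichletCharacter.conj_apply_of_isUnit _ hx,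
      DirichletCharacter.sum_char_inv_mul_char_eq ℂ hx y]
    grind
  · simp only [MulChar.map_nonunit _ hx, map_zero, zero_mul, sum_const_zero]
    grind

lemma sum_gaussCoeff_mul_apply (b m : ℤ) {q : ℕ} [NeZero q] :
    ∑ χ : DirichletCharacter ℂ q, gaussCoeff b q χ * χ m =
      if IsUnit (m : ZMod q) then e (b * m / q) else 0 := by
  have hφ : (q.totient : ℂ) ≠ 0 := by exact_mod_cast (Nat.totient_pos.mpr (NeZero.pos q)).ne'
  calc ∑ χ : DirichletCharacter ℂ q, gaussCoeff b q χ * χ m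
      = (q.totient : ℂ)⁻¹ * ∑ x : ZMod q,
          e (b * x.val / q) * ∑ χ : DirichletCharacter ℂ q, starRingEnd ℂ (χ x) * χ m := by
        simp only [gaussCoeff_eq_sum_zmod, mul_sum, sum_mul]
        rw [sum_comm]
        refine sum_congr rfl fun x _ => sum_congr rfl fun χ _ => by ring
    _ = if IsUnit (m : ZMod q) then e (b * m / q) else 0 := by
        simp only [DirichletCharacter.sum_conj_apply_mul_apply, ite_and, mul_ite, mul_zero,
          Fintype.sum_ite_eq']
        split_ifs
        · rw [e_mul_val_intCast_div]
          field_simp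
        · simp

lemma dvd_and_isUnit_ediv_iff_gcd_eq {d k : ℕ} (hd : 0 < d) (n : ℤ) :
    (d : ℤ) ∣ n ∧ IsUnit ((n / d : ℤ) : ZMod k) ↔ Int.gcd n ((d * k : ℕ) : ℤ) = d := by
  rw [Nat.cast_mul, ZMod.coe_int_isUnit_iff_isCoprime, Int.isCoprime_iff_gcd_eq_one, Int.gcd_comm]
  constructor
  · rintro ⟨⟨m, rfl⟩, hm⟩
    rw [Int.mul_ediv_cancel_left _ (by exact_mod_cast hd.ne')] at hm
    rw [Int.gcd_mul_left, hm, Int.natAbs_natCast, mul_one]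
  · intro h
    have hpos : 0 < Int.gcd n (d * k) := by rw [h]; exact hd
    refine ⟨h ▸ Int.gcd_dvd_left .., ?_⟩
    have := Int.gcd_div_gcd_div_gcd hpos
    rwa [h, Int.mul_ediv_cancel_left _ (by exact_mod_cast hd.ne')] at this

lemma sum_gaussCoeff_mul_ite {q q₁ d : ℕ} [NeZero q₁] (hd : 0 < d) (hq : d * q₁ = q)
    (b n : ℤ) :
    ∑ χ : DirichletCharacter ℂ q₁,
        gaussCoeff b q₁ χ * (if (d : ℤ) ∣ n then χ ((n / d : ℤ) : ZMod q₁) else 0) =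
      if Int.gcd n q = d then e (b * n / q) else 0 := by
  subst hq
  have hiff := dvd_and_isUnit_ediv_iff_gcd_eq (k := q₁) hd n
  by_cases hdvd : (d : ℤ) ∣ n
  · simp only [hdvd, true_and, if_true, sum_gaussCoeff_mul_apply] at hiff ⊢
    refine if_congr hiff ?_ rfl
    rw [Int.cast_div_charZero hdvd]
    have : (d : ℝ) ≠ 0 := by exact_mod_cast hd.ne'
    push_cast
    field_simp
  · simp only [hdvd, false_and, if_false, mul_zero, sum_const_zero] at hiff ⊢
    rw [if_neg fun h => hiff.mpr h]

theorem stmt16_general (q : ℕ) (hq : 1 ≤ q) (b : ℤ) :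
    (∀ n : ℤ,
      e ((b : ℝ) * (n : ℝ) / q) =
        ∑ q₁ ∈ q.divisors, ∑ χ : DirichletCharacter ℂ q₁,
          gaussCoeff b q₁ χ *
            (if ((q / q₁ : ℕ) : ℤ) ∣ n then χ (((n / ((q / q₁ : ℕ) : ℤ)) : ℤ) : ZMod q₁)
             else 0)) ∧
    (∀ q₁ ∈ q.divisors, ∀ χ : DirichletCharacter ℂ q₁, ‖gaussCoeff b q₁ χ‖ ≤ 1) := by
  refine ⟨fun n => ?_, fun q₁ _ χ => norm_gaussCoeff_le_one b χ⟩
  have hq0 : q ≠ 0 := Nat.one_le_iff_ne_zero.mp hq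
  have hgcd : Int.gcd n q ∣ q := by exact_mod_cast Int.gcd_dvd_right n q
  have hterm : ∀ q₁ ∈ q.divisors, (∑ χ : DirichletCharacter ℂ q₁, gaussCoeff b q₁ χ *
      (if ((q / q₁ : ℕ) : ℤ) ∣ n then χ (((n / ((q / q₁ : ℕ) : ℤ)) : ℤ) : ZMod q₁) else 0)) =
      if q₁ = q / Int.gcd n q then e (b * n / q) else 0 := by
    intro q₁ hq₁
    have : NeZero q₁ := ⟨(Nat.pos_of_mem_divisors hq₁).ne'⟩
    have hq₁q := Nat.dvd_of_mem_divisors hq₁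
    rw [sum_gaussCoeff_mul_ite (Nat.div_pos (Nat.le_of_dvd (Nat.pos_of_ne_zero hq0) hq₁q)
      (NeZero.pos q₁)) (Nat.div_mul_cancel hq₁q)]
    refine if_congr ?_ rfl rfl
    rw [Nat.eq_div_iff_mul_eq_left (NeZero.ne q₁) hq₁q,
      Nat.eq_div_iff_mul_eq_left (ne_zero_of_dvd_ne_zero hq0 hgcd) hgcd, mul_comm]
  rw [sum_congr rfl hterm, sum_ite_eq', if_pos]
  exact Nat.mem_divisors.mpr ⟨Nat.div_dvd_of_dvd hgcd, hq0⟩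

/-- Fourier decomposition of `e(bn/q)` into Dirichlet characters over the
factorizations `q = q₁ q₂` (with `q₂ = q / q₁` for `q₁ ∣ q`), together with the bound
`|c_{b,χ}| ≤ 1`. -/
theorem stmt16 (q : ℕ) (hq : 1 ≤ q) (b : ℤ) (hb : Int.gcd b q = 1) :
    (∀ n : ℤ,
      e ((b : ℝ) * (n : ℝ) / q) =
        ∑ q₁ ∈ q.divisors, ∑ χ : DirichletCharacter ℂ q₁,
          gaussCoeff b q₁ χ *
            (if ((q / q₁ : ℕ) : ℤ) ∣ n then χ (((n / ((q / q₁ : ℕ) : ℤ)) : ℤ) : ZMod q₁)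
             else 0)) ∧
    (∀ q₁ ∈ q.divisors, ∀ χ : DirichletCharacter ℂ q₁, ‖gaussCoeff b q₁ χ‖ ≤ 1) :=
  stmt16_general q hq b
end
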